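/- Let N ≥ 1, let u ∈ ℂ^N be a unit vector, and let P be an N×N complex matrix with P† = P and P² = P (an orthogonal projection). Let p = ⟨u, Pu⟩, a real number in [0,1]. Then the trace norm satisfies ‖(Pu)(Pu)† − u u†‖₁ = √((1−p)(1+3p)); in particular, the trace distance ½‖(Pu)(Pu)† − u u†‖₁ is at most √(1−p). -/

import Mathlib

open Matrix Finset
open scoped ComplexOrder

noncomputable section

/-- The rank-one matrix `v v†`. -/
def outer {I : Type*} (v : I → ℂ) : Matrix I I ℂ :=
  Matrix.of fun a b => v a * (starRingEnd ℂ) (v b)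

/-- The trace norm `‖X‖₁ = tr √(X† X)`. -/
def traceNorm {I : Type*} [Fintype I] [DecidableEq I] (X : Matrix I I ℂ) : ℝ :=
  (((Matrix.posSemidef_conjTranspose_mul_self X).1.eigenvectorUnitary : Matrix I I ℂ) *
    diagonal (((↑) : ℝ → ℂ) ∘ (√·) ∘ (Matrix.posSemidef_conjTranspose_mul_self X).1.eigenvalues) *
    (star (Matrix.posSemidef_conjTranspose_mul_self X).1.eigenvectorUnitary : Matrix I I ℂ)).trace.re

/-- Trace distance. -/
def traceDist {I : Type*} [Fintype I] [DecidableEq I] (ρ σ : Matrix I I ℂ) : ℝ :=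
  traceNorm (ρ - σ) / 2

/-!
Put `v = P u` and `p = ⟨u, v⟩`; then `⟨v, v⟩ = ⟨v, u⟩ = p` and `‖u - v‖² = 1 - p`. The matrix
`T = (1 - p)(vv† + uu†) + 2p (v - u)(v - u)†` is positive semidefinite and satisfies
`T² = (1 - p)(1 + 3p) X²` for `X = vv† - uu†`, so `T / √((1 - p)(1 + 3p))` is `|X|` and the trace norm
of `X` is `tr T / √((1 - p)(1 + 3p)) = √((1 - p)(1 + 3p))`. The bound on the trace distance is
`(1 - p)(1 + 3p) ≤ 4(1 - p)`.
-/

section TraceNorm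

variable {I : Type*} [Fintype I] [DecidableEq I]

open scoped MatrixOrder in
theorem traceNorm_eq_re_trace_of_mul_self_eq {X S : Matrix I I ℂ} (hS : S.PosSemidef)
    (hSS : S * S = Xᴴ * X) : traceNorm X = S.trace.re := by
  suffices h : cfc Real.sqrt (Xᴴ * X) = S by
    rw [← h, (posSemidef_conjTranspose_mul_self X).1.cfc_eq]
    rfl
  rw [← cfcₙ_eq_cfc, ← CFC.sqrt_eq_real_sqrt _ (posSemidef_conjTranspose_mul_self X).nonneg]
  exact CFC.sqrt_unique hSS hS.nonneg

theorem traceNorm_zero : traceNorm (0 : Matrix I I ℂ) = 0 := by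
  simp [traceNorm_eq_re_trace_of_mul_self_eq PosSemidef.zero (X := 0) (by simp)]

theorem traceNorm_eq_re_trace_div_sqrt {X T : Matrix I I ℂ} {c : ℝ} (hc : 0 < c)
    (hT : T.PosSemidef) (hTT : T * T = c • (Xᴴ * X)) : traceNorm X = T.trace.re / √c := by
  have hS : ((√c)⁻¹ • T).PosSemidef := hT.smul (by positivity)
  have hSS : ((√c)⁻¹ • T) * ((√c)⁻¹ • T) = Xᴴ * X := by
    have hc' : (√c)⁻¹ * (√c)⁻¹ * c = 1 := by
      rw [← mul_inv, Real.mul_self_sqrt hc.le, inv_mul_cancel₀ hc.ne']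
    rw [Matrix.smul_mul, Matrix.mul_smul, hTT, smul_smul, smul_smul, hc', one_smul]
  rw [traceNorm_eq_re_trace_of_mul_self_eq hS hSS, trace_smul, Complex.smul_re, smul_eq_mul,
    inv_mul_eq_div]

end TraceNorm

theorem outer_eq_vecMulVec {I : Type*} (v : I → ℂ) : outer v = vecMulVec v (star v) := rfl

section Gram

variable {I : Type*} [Fintype I] {u v : I → ℂ} {p : ℝ}

theorem ofReal_re_star_dotProduct_self (v : I → ℂ) : ((star v ⬝ᵥ v).re : ℂ) = star v ⬝ᵥ v :=
  Complex.conj_eq_iff_re.mp (star_dotProduct v v).symm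

theorem star_dotProduct_comm_of_eq_ofReal (huv : star u ⬝ᵥ v = p) : star v ⬝ᵥ u = p := by
  rw [star_dotProduct, huv, Complex.star_def, Complex.conj_ofReal]

/-- Equals `√((1 - p)(1 + 3p)) • |vv† - uu†|` when `⟨u, u⟩ = 1` and `⟨u, v⟩ = ⟨v, v⟩ = p`. -/
def scaledAbsOuterSub (u v : I → ℂ) (p : ℝ) : Matrix I I ℂ :=
  (1 - p) • (outer v + outer u) + (2 * p) • outer (v - u)

theorem posSemidef_scaledAbsOuterSub (hp0 : 0 ≤ p) (hp1 : p ≤ 1) :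
    (scaledAbsOuterSub u v p).PosSemidef :=
  (((posSemidef_vecMulVec_self_star v).add (posSemidef_vecMulVec_self_star u)).smul
    (sub_nonneg.2 hp1)).add ((posSemidef_vecMulVec_self_star (v - u)).smul (by positivity))

variable (hu : star u ⬝ᵥ u = 1) (hv : star v ⬝ᵥ v = p) (huv : star u ⬝ᵥ v = p)
include hu hv huv

theorem scaledAbsOuterSub_mul_self :
    scaledAbsOuterSub u v p * scaledAbsOuterSub u v p =
      ((1 - p) * (1 + 3 * p)) • ((outer v - outer u)ᴴ * (outer v - outer u)) := by
  simp only [scaledAbsOuterSub, outer_eq_vecMulVec, star_sub, vecMulVec_sub, sub_vecMulVec,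
    conjTranspose_sub, conjTranspose_vecMulVec, star_star, Matrix.add_mul, Matrix.mul_add,
    Matrix.sub_mul, Matrix.mul_sub, Matrix.smul_mul, Matrix.mul_smul, vecMulVec_mul_vecMulVec,
    vecMulVec_smul, hu, hv, huv, star_dotProduct_comm_of_eq_ofReal huv]
  module

theorem trace_scaledAbsOuterSub :
    (scaledAbsOuterSub u v p).trace = (1 - p) * (1 + 3 * p) := by
  simp only [scaledAbsOuterSub, outer_eq_vecMulVec, trace_add, trace_smul, trace_vecMulVec,
    star_sub, dotProduct_sub, dotProduct_comm _ (star _), hu, hv, huv,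
    star_dotProduct_comm_of_eq_ofReal huv, Complex.real_smul]
  push_cast
  ring

theorem star_sub_dotProduct_sub_eq : star (u - v) ⬝ᵥ (u - v) = ((1 - p : ℝ) : ℂ) := by
  simp only [star_sub, dotProduct_sub, sub_dotProduct, hu, hv, huv,
    star_dotProduct_comm_of_eq_ofReal huv]
  push_cast
  ring

theorem traceNorm_outer_sub_outer [DecidableEq I] :
    traceNorm (outer v - outer u) = √((1 - p) * (1 + 3 * p)) := by
  have hp0 : 0 ≤ p := by simpa [hv] using dotProduct_star_self_nonneg v
  have hp1 : p ≤ 1 := by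
    have := dotProduct_star_self_nonneg (u - v)
    rwa [star_sub_dotProduct_sub_eq hu hv huv, Complex.zero_le_real, sub_nonneg] at this
  rcases hp1.lt_or_eq with hp1 | rfl
  · have hc : 0 < (1 - p) * (1 + 3 * p) := by nlinarith
    rw [traceNorm_eq_re_trace_div_sqrt hc (posSemidef_scaledAbsOuterSub hp0 hp1.le)
      (scaledAbsOuterSub_mul_self hu hv huv), trace_scaledAbsOuterSub hu hv huv]
    exact_mod_cast Real.div_sqrt
  · obtain rfl : u = v := by
      rw [← sub_eq_zero, ← dotProduct_star_self_eq_zero, star_sub_dotProduct_sub_eq hu hv huv]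
      simp
    simp [traceNorm_zero]

end Gram

theorem star_mulVec_dotProduct_mulVec_self {I : Type*} [Fintype I] {P : Matrix I I ℂ}
    (hP : Pᴴ = P) (hP2 : P * P = P) (u : I → ℂ) :
    star (P *ᵥ u) ⬝ᵥ P *ᵥ u = star u ⬝ᵥ P *ᵥ u := by
  rw [star_mulVec, ← dotProduct_mulVec, mulVec_mulVec, hP, hP2]

theorem star_dotProduct_self_eq_one {I : Type*} [Fintype I] {u : I → ℂ}
    (hu : ∑ x, ‖u x‖ ^ 2 = 1) : star u ⬝ᵥ u = 1 := by
  simp only [dotProduct, Pi.star_apply, Complex.star_def, Complex.conj_mul']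
  exact_mod_cast hu

theorem sqrt_mul_one_add_three_mul_div_two_le (p : ℝ) :
    √((1 - p) * (1 + 3 * p)) / 2 ≤ √(1 - p) := by
  rw [div_le_iff₀ two_pos, ← Real.sqrt_mul_self zero_le_two, ← Real.sqrt_mul' _ (by norm_num)]
  exact Real.sqrt_le_sqrt (by nlinarith [sq_nonneg (1 - p)])

theorem projected_state_trace_dist_general (N : ℕ) (u : Fin N → ℂ)
    (hu : ∑ x, ‖u x‖ ^ 2 = 1)
    (P : Matrix (Fin N) (Fin N) ℂ) (hP : Pᴴ = P) (hP2 : P * P = P) :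
    traceNorm (outer (P.mulVec u) - outer u)
        = Real.sqrt ((1 - (star u ⬝ᵥ P.mulVec u).re) * (1 + 3 * (star u ⬝ᵥ P.mulVec u).re)) ∧
      traceDist (outer (P.mulVec u)) (outer u)
        ≤ Real.sqrt (1 - (star u ⬝ᵥ P.mulVec u).re) := by
  have hvv := star_mulVec_dotProduct_mulVec_self hP hP2 u
  have huv : star u ⬝ᵥ P *ᵥ u = ((star u ⬝ᵥ P *ᵥ u).re : ℂ) := by
    rw [← hvv, ofReal_re_star_dotProduct_self]
  have hnorm := traceNorm_outer_sub_outer (star_dotProduct_self_eq_one hu) (hvv.trans huv) huv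
  refine ⟨hnorm, ?_⟩
  rw [traceDist, hnorm]
  exact sqrt_mul_one_add_three_mul_div_two_le _

/-- For a unit vector `u` and an orthogonal projection `P`, with
`p = ⟨u, Pu⟩`, one has `‖(Pu)(Pu)† − uu†‖₁ = √((1−p)(1+3p))`, so the trace distance between
`(Pu)(Pu)†` and `uu†` is at most `√(1−p)`. -/
theorem projected_state_trace_dist (N : ℕ) (hN : 1 ≤ N) (u : Fin N → ℂ)
    (hu : ∑ x, ‖u x‖ ^ 2 = 1)
    (P : Matrix (Fin N) (Fin N) ℂ) (hP : Pᴴ = P) (hP2 : P * P = P) :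
    traceNorm (outer (P.mulVec u) - outer u)
        = Real.sqrt ((1 - (star u ⬝ᵥ P.mulVec u).re) * (1 + 3 * (star u ⬝ᵥ P.mulVec u).re)) ∧
      traceDist (outer (P.mulVec u)) (outer u)
        ≤ Real.sqrt (1 - (star u ⬝ᵥ P.mulVec u).re) :=
  projected_state_trace_dist_general N u hu P hP hP2

end
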